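/- arXiv:2204.09386 — 6 statements merged into one kernel-verified Lean document; each statement's English description precedes it below -/
import Mathlib

section
/- Let h : ℝ → ℝ be a differentiable function. If h(0) ≥ 0 and for every t ≥ 0 with h(t) = 0 one has deriv h t > 0, then h(t) ≥ 0 for all t ≥ 0. -/
theorem scalar_boundary_crossing (h : ℝ → ℝ) (hdiff : Differentiable ℝ h)
    (h0 : h 0 ≥ 0)
    (hboundary : ∀ t : ℝ, t ≥ 0 → h t = 0 → deriv h t > 0) :
    ∀ t : ℝ, t ≥ 0 → h t ≥ 0 := by
  intro t1 ht1
  by_contra hneg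
  push_neg at hneg
  have hcont : Continuous h := hdiff.continuous
  set S : Set ℝ := {u | u ∈ Set.Icc 0 t1 ∧ 0 ≤ h u} with hS
  have hSne : S.Nonempty := ⟨0, ⟨le_refl 0, ht1⟩, h0⟩
  have hSbdd : BddAbove S := ⟨t1, fun u hu => hu.1.2⟩
  set s := sSup S with hs
  have hsmem : s ∈ Set.Icc 0 t1 ∧ 0 ≤ h s := by
    have hclosed : IsClosed S := by
      have : S = Set.Icc 0 t1 ∩ h ⁻¹' Set.Ici 0 := by
        ext u; simp [hS, Set.mem_Icc, and_assoc]
      rw [this]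
      exact isClosed_Icc.inter (isClosed_Ici.preimage hcont)
    exact hclosed.csSup_mem hSne hSbdd
  obtain ⟨⟨hs0, hst1⟩, hhs⟩ := hsmem
  have hslt : s < t1 := lt_of_le_of_ne hst1 (fun heq => by rw [heq] at hhs; linarith)
  -- h s = 0
  have hhs0 : h s = 0 := by
    by_contra hne
    have hpos : 0 < h s := lt_of_le_of_ne hhs (Ne.symm hne)
    have : ∀ᶠ u in nhds s, 0 < h u :=
      continuousAt_const.eventually_lt (hcont.continuousAt (x := s)) hpos
    obtain ⟨ε, hε, hball⟩ := Metric.eventually_nhds_iff.mp this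
    set u := min (s + ε / 2) t1 with hu
    have hu_gt : s < u := lt_min (by linarith) hslt
    have huS : u ∈ S := by
      refine ⟨⟨by linarith, min_le_right _ _⟩, le_of_lt (hball ?_)⟩
      rw [Real.dist_eq, abs_lt]
      constructor
      · have := min_le_left (s + ε / 2) t1; nlinarith [hu_gt]
      · have := min_le_left (s + ε / 2) t1; linarith
    exact absurd (le_csSup hSbdd huS) (not_le.mpr hu_gt)
  have hderiv : 0 < deriv h s := hboundary s hs0 hhs0
  -- slope tendsto deriv
  have hd : HasDerivAt h (deriv h s) s := (hdiff s).hasDerivAt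
  have hslope := hasDerivAt_iff_tendsto_slope.mp hd
  have hev : ∀ᶠ u in nhdsWithin s {s}ᶜ, 0 < slope h s u :=
    hslope.eventually (eventually_gt_nhds hderiv)
  have hev2 : ∀ᶠ u in nhdsWithin s (Set.Ioi s), 0 < slope h s u :=
    nhdsWithin_mono s (fun u (hu : u ∈ Set.Ioi s) => ne_of_gt hu) hev
  have hne : (nhdsWithin s (Set.Ioi s)).NeBot := nhdsGT_neBot s
  have hev3 : ∀ᶠ u in nhdsWithin s (Set.Ioi s), u < t1 :=
    eventually_nhdsWithin_of_eventually_nhds (eventually_lt_nhds hslt)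
  have hev4 : ∀ᶠ u in nhdsWithin s (Set.Ioi s), u ∈ Set.Ioi s :=
    eventually_mem_nhdsWithin
  obtain ⟨u, hu1, hu2, hu3⟩ := (hev2.and (hev3.and hev4)).exists
  have husgt : s < u := hu3
  have : 0 < h u := by
    have := hu1
    rw [slope_def_field] at this
    have hd : 0 < u - s := by linarith
    rw [hhs0] at this
    have : 0 < (h u - 0) / (u - s) := by
      simpa [div_eq_div_iff] using this
    rcases div_pos_iff.mp this with ⟨ha, _⟩ | ⟨_, hb⟩
    · linarith
    · linarith
  have huS : u ∈ S := ⟨⟨by linarith, le_of_lt hu2⟩, le_of_lt this⟩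
  exact absurd (le_csSup hSbdd huS) (not_le.mpr husgt)
end

section
/- Let n be a natural number, B : EuclideanSpace ℝ (Fin n) → ℝ be continuously differentiable (ContDiff ℝ 1), and let x : ℝ → EuclideanSpace ℝ (Fin n) and v : ℝ → EuclideanSpace ℝ (Fin n) satisfy HasDerivAt x (v t) t for all t ≥ 0. If B(x(0)) ≥ 0 and for every t ≥ 0 with B(x(t)) = 0 one has fderiv ℝ B (x(t)) (v(t)) > 0, then B(x(t)) ≥ 0 for all t ≥ 0; that is, the trajectory remains in the zero-superlevel set 𝓑 = {x | B(x) ≥ 0} for all nonnegative times. -/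
theorem superlevel_forward_invariance (n : ℕ)
    (B : EuclideanSpace ℝ (Fin n) → ℝ) (hB : ContDiff ℝ 1 B)
    (x v : ℝ → EuclideanSpace ℝ (Fin n))
    (hderiv : ∀ t : ℝ, t ≥ 0 → HasDerivAt x (v t) t)
    (h0 : B (x 0) ≥ 0)
    (hboundary : ∀ t : ℝ, t ≥ 0 → B (x t) = 0 → fderiv ℝ B (x t) (v t) > 0) :
    ∀ t : ℝ, t ≥ 0 → B (x t) ≥ 0 := by
  intro t ht
  by_contra hneg
  push_neg at hneg
  set g : ℝ → ℝ := fun u => B (x u) with hg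
  -- continuity of g at nonnegative points
  have hgc : ∀ u : ℝ, 0 ≤ u → ContinuousAt g u := by
    intro u hu
    exact (hB.continuous.continuousAt).comp (hderiv u hu).continuousAt
  have hgcOn : ContinuousOn g (Set.Icc 0 t) := fun u hu =>
    (hgc u hu.1).continuousWithinAt
  set S : Set ℝ := Set.Icc 0 t ∩ g ⁻¹' Set.Ici 0 with hS
  have hSne : S.Nonempty := ⟨0, ⟨le_rfl, ht⟩, h0⟩
  have hSbdd : BddAbove S := ⟨t, fun u hu => hu.1.2⟩
  have hSclosed : IsClosed S :=
    hgcOn.preimage_isClosed_of_isClosed isClosed_Icc isClosed_Ici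
  set s := sSup S with hs
  have hsS : s ∈ S := hSclosed.csSup_mem hSne hSbdd
  have hs0 : 0 ≤ s := hsS.1.1
  have hst : s ≤ t := hsS.1.2
  have hgs : 0 ≤ g s := hsS.2
  have hsltt : s < t := by
    rcases lt_or_eq_of_le hst with h | h
    · exact h
    · exfalso; rw [h] at hgs; exact absurd hneg (not_lt.mpr hgs)
  -- on (s, t], g < 0
  have hltneg : ∀ u, s < u → u ≤ t → g u < 0 := by
    intro u hsu hut
    by_contra h
    push_neg at h
    have : u ∈ S := ⟨⟨le_trans hs0 hsu.le, hut⟩, h⟩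
    exact absurd (le_csSup hSbdd this) (not_le.mpr hsu)
  -- g s = 0 by right continuity
  have hgs0 : g s = 0 := by
    refine le_antisymm ?_ hgs
    have htend : Filter.Tendsto g (nhdsWithin s (Set.Ioi s)) (nhds (g s)) :=
      ((hgc s hs0).continuousWithinAt).tendsto
    refine le_of_tendsto htend ?_
    filter_upwards [Ioo_mem_nhdsGT_of_mem ⟨le_rfl, hsltt⟩] with u hu
    exact (hltneg u hu.1 hu.2.le).le
  -- derivative of g at s
  have hd : HasDerivAt g (fderiv ℝ B (x s) (v s)) s := by
    have hB' : HasFDerivAt B (fderiv ℝ B (x s)) (x s) :=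
      (hB.differentiable one_ne_zero (x s)).hasFDerivAt
    exact hB'.comp_hasDerivAt s (hderiv s hs0)
  have hpos : 0 < fderiv ℝ B (x s) (v s) := hboundary s hs0 hgs0
  -- but the right slopes are nonpositive
  have hslope : Filter.Tendsto (slope g s) (nhdsWithin s (Set.Ioi s))
      (nhds (fderiv ℝ B (x s) (v s))) := by
    have := hasDerivAt_iff_tendsto_slope.mp hd
    exact this.mono_left (nhdsWithin_mono s fun u hu => ne_of_gt hu)
  have hle : fderiv ℝ B (x s) (v s) ≤ 0 := by
    refine le_of_tendsto hslope ?_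
    filter_upwards [Ioo_mem_nhdsGT_of_mem ⟨le_rfl, hsltt⟩] with u hu
    have hgu : g u < 0 := hltneg u hu.1 hu.2.le
    rw [slope_def_field, hgs0, sub_zero]
    exact div_nonpos_of_nonpos_of_nonneg hgu.le (sub_nonneg.mpr hu.1.le)
  exact absurd hpos (not_lt.mpr hle)
end

section
/- Let n be a natural number, let S and I be subsets of EuclideanSpace ℝ (Fin n), and let B : EuclideanSpace ℝ (Fin n) → ℝ be continuously differentiable (ContDiff ℝ 1). Assume (4a) B(x) < 0 for all x ∉ S; (4b) B(x) ≥ 0 for all x ∈ I. Let x : ℝ → EuclideanSpace ℝ (Fin n) and v : ℝ → EuclideanSpace ℝ (Fin n) satisfy HasDerivAt x (v t) t for all t ≥ 0, with x(0) ∈ I, and suppose (4c) for every t ≥ 0 with B(x(t)) = 0 one has fderiv ℝ B (x(t)) (v(t)) > 0. Then x(t) ∈ S for all t ≥ 0. -/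
theorem cbc_safety (n : ℕ)
    (S I : Set (EuclideanSpace ℝ (Fin n)))
    (B : EuclideanSpace ℝ (Fin n) → ℝ) (hB : ContDiff ℝ 1 B)
    (h4a : ∀ y : EuclideanSpace ℝ (Fin n), y ∉ S → B y < 0)
    (h4b : ∀ y : EuclideanSpace ℝ (Fin n), y ∈ I → B y ≥ 0)
    (x v : ℝ → EuclideanSpace ℝ (Fin n))
    (hderiv : ∀ t : ℝ, t ≥ 0 → HasDerivAt x (v t) t)
    (hx0 : x 0 ∈ I)
    (h4c : ∀ t : ℝ, t ≥ 0 → B (x t) = 0 → fderiv ℝ B (x t) (v t) > 0) :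
    ∀ t : ℝ, t ≥ 0 → x t ∈ S := by
  set g : ℝ → ℝ := fun t => B (x t) with hg
  have hgderiv : ∀ t : ℝ, t ≥ 0 → HasDerivAt g (fderiv ℝ B (x t) (v t)) t := by
    intro t ht
    have hBd : HasFDerivAt B (fderiv ℝ B (x t)) (x t) :=
      (hB.differentiable one_ne_zero (x t)).hasFDerivAt
    exact hBd.comp_hasDerivAt t (hderiv t ht)
  have key : ∀ t : ℝ, t ≥ 0 → 0 ≤ g t := by
    intro t₁ ht₁
    by_contra hneg
    push_neg at hneg
    have hg0 : 0 ≤ g 0 := h4b _ hx0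
    have ht₁pos : 0 < t₁ := by
      rcases lt_or_eq_of_le ht₁ with h | h
      · exact h
      · exfalso; rw [← h] at hneg; linarith
    set A : Set ℝ := {s | s ∈ Set.Icc (0:ℝ) t₁ ∧ 0 ≤ g s} with hA
    have hAne : A.Nonempty := ⟨0, ⟨le_rfl, le_of_lt ht₁pos⟩, hg0⟩
    have hAbdd : BddAbove A := ⟨t₁, fun s hs => hs.1.2⟩
    set τ := sSup A with hτ
    have hτle : τ ≤ t₁ := csSup_le hAne (fun s hs => hs.1.2)
    have hτ0 : 0 ≤ τ := le_csSup hAbdd ⟨⟨le_rfl, le_of_lt ht₁pos⟩, hg0⟩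
    have hcont : ContinuousAt g τ := (hgderiv τ hτ0).continuousAt
    -- g τ ≥ 0
    have hgτ_nonneg : 0 ≤ g τ := by
      by_contra h
      push_neg at h
      have hmem : g ⁻¹' Set.Iio 0 ∈ nhds τ := hcont (Iio_mem_nhds h)
      rcases Metric.mem_nhds_iff.mp hmem with ⟨ε, hε, hball⟩
      have hub : ∀ s ∈ A, s ≤ τ - ε := by
        intro s hs
        by_contra hsc
        push_neg at hsc
        have hsτ : s ≤ τ := le_csSup hAbdd hs
        have : s ∈ Metric.ball τ ε := by
          rw [Metric.mem_ball, Real.dist_eq, abs_of_nonpos (by linarith)]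
          linarith
        have := hball this
        simp only [Set.mem_preimage, Set.mem_Iio] at this
        linarith [hs.2]
      have : τ ≤ τ - ε := csSup_le hAne hub
      linarith
    have hτlt : τ < t₁ := lt_of_le_of_ne hτle (by intro h; rw [h] at hgτ_nonneg; linarith)
    -- g τ = 0
    have hgτ : g τ = 0 := by
      rcases lt_or_eq_of_le hgτ_nonneg with h | h
      · exfalso
        have hmem : ∀ᶠ s in nhds τ, 0 < g s := hcont (Ioi_mem_nhds h)
        have h1 : ∀ᶠ s in nhdsWithin τ (Set.Ioi τ), 0 < g s :=
          nhdsWithin_le_nhds hmem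
        have h2 : ∀ᶠ s in nhdsWithin τ (Set.Ioi τ), s < t₁ :=
          nhdsWithin_le_nhds (Iio_mem_nhds hτlt)
        have h3 : ∀ᶠ s in nhdsWithin τ (Set.Ioi τ), τ < s :=
          eventually_mem_nhdsWithin
        rcases (h1.and (h2.and h3)).exists with ⟨s, hs1, hs2, hs3⟩
        have hsA : s ∈ A := ⟨⟨by linarith, le_of_lt hs2⟩, le_of_lt hs1⟩
        have : s ≤ τ := le_csSup hAbdd hsA
        linarith
      · exact h.symm
    -- derivative positive at τ
    have hd : 0 < fderiv ℝ B (x τ) (v τ) := h4c τ hτ0 hgτ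
    have hslope := hasDerivAt_iff_tendsto_slope.mp (hgderiv τ hτ0)
    have hev : ∀ᶠ s in nhdsWithin τ {τ}ᶜ, 0 < slope g τ s :=
      hslope (Ioi_mem_nhds hd)
    have hev' : ∀ᶠ s in nhdsWithin τ (Set.Ioi τ), 0 < slope g τ s :=
      hev.filter_mono (nhdsWithin_mono τ (fun s hs => ne_of_gt hs))
    have h2 : ∀ᶠ s in nhdsWithin τ (Set.Ioi τ), s < t₁ :=
      nhdsWithin_le_nhds (Iio_mem_nhds hτlt)
    have h3 : ∀ᶠ s in nhdsWithin τ (Set.Ioi τ), τ < s :=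
      eventually_mem_nhdsWithin
    rcases (hev'.and (h2.and h3)).exists with ⟨s, hs1, hs2, hs3⟩
    have hgs : 0 < g s := by
      have := hs1
      rw [slope_def_field] at this
      have hpos : 0 < s - τ := by linarith
      have := mul_pos this hpos
      rw [div_mul_cancel₀] at this
      · rw [hgτ] at this; linarith
      · exact ne_of_gt hpos
    have hsA : s ∈ A := ⟨⟨by linarith, le_of_lt hs2⟩, le_of_lt hgs⟩
    have : s ≤ τ := le_csSup hAbdd hsA
    linarith
  intro t ht
  by_contra hs
  exact absurd (h4a _ hs) (not_lt.mpr (key t ht))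
end

section
/- Let n, m, h be natural numbers; let f : EuclideanSpace ℝ (Fin n) → EuclideanSpace ℝ (Fin n), g : EuclideanSpace ℝ (Fin n) → (Fin m → ℝ) →ₗ[ℝ] EuclideanSpace ℝ (Fin n) (pointwise, g(x) is a linear map applied to the input), u : EuclideanSpace ℝ (Fin n) → (Fin m → ℝ), A : Matrix (Fin h) (Fin m) ℝ, b : Fin h → ℝ, and s, w : EuclideanSpace ℝ (Fin n) → ℝ. Let B : EuclideanSpace ℝ (Fin n) → ℝ be continuously differentiable, and let ε₁, ε₂ > 0. Suppose there exist functions σ_safe, σ_init : EuclideanSpace ℝ (Fin n) → ℝ with σ_safe ≥ 0 and σ_init ≥ 0 everywhere, a function λ₁ : EuclideanSpace ℝ (Fin n) → ℝ, and λ₂ : EuclideanSpace ℝ (Fin n) → (Fin h → ℝ), such that for all x: (i) −B(x) + σ_safe(x)·s(x) − ε₁ ≥ 0; (ii) B(x) − σ_init(x)·w(x) ≥ 0; (iii) fderiv ℝ B x (f(x) + g(x)(u(x))) + λ₁(x)·B(x) − ε₂ ≥ 0; and (iv) for all i, −(λ₂ x i)·B(x) + (A.mulVec (u x)) i + b i ≥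 0. Then B satisfies the CBC conditions: B(x) < 0 whenever s(x) < 0; B(x) ≥ 0 whenever w(x) ≥ 0; and for every x with B(x) = 0, both fderiv ℝ B x (f(x) + g(x)(u(x))) > 0 and (A.mulVec (u x)) i + b i ≥ 0 for all i. -/
theorem sos_cbc_synthesis (n m h : ℕ)
    (f : EuclideanSpace ℝ (Fin n) → EuclideanSpace ℝ (Fin n))
    (g : EuclideanSpace ℝ (Fin n) → (Fin m → ℝ) →ₗ[ℝ] EuclideanSpace ℝ (Fin n))
    (u : EuclideanSpace ℝ (Fin n) → (Fin m → ℝ))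
    (A : Matrix (Fin h) (Fin m) ℝ) (b : Fin h → ℝ)
    (s w : EuclideanSpace ℝ (Fin n) → ℝ)
    (B : EuclideanSpace ℝ (Fin n) → ℝ) (hB : ContDiff ℝ 1 B)
    (ε₁ ε₂ : ℝ) (hε₁ : ε₁ > 0) (hε₂ : ε₂ > 0)
    (σsafe σinit : EuclideanSpace ℝ (Fin n) → ℝ)
    (hσsafe : ∀ x, σsafe x ≥ 0) (hσinit : ∀ x, σinit x ≥ 0)
    (lam₁ : EuclideanSpace ℝ (Fin n) → ℝ)
    (lam₂ : EuclideanSpace ℝ (Fin n) → (Fin h → ℝ))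
    (h15a : ∀ x, -B x + σsafe x * s x - ε₁ ≥ 0)
    (h15b : ∀ x, B x - σinit x * w x ≥ 0)
    (h15c : ∀ x, fderiv ℝ B x (f x + g x (u x)) + lam₁ x * B x - ε₂ ≥ 0)
    (h15d : ∀ x, ∀ i : Fin h, -(lam₂ x i) * B x + (A.mulVec (u x)) i + b i ≥ 0) :
    (∀ x, s x < 0 → B x < 0) ∧
    (∀ x, w x ≥ 0 → B x ≥ 0) ∧
    (∀ x, B x = 0 →
      fderiv ℝ B x (f x + g x (u x)) > 0 ∧
      ∀ i : Fin h, (A.mulVec (u x)) i + b i ≥ 0) := by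
  refine ⟨fun x hs => ?_, fun x hw => ?_, fun x hBx => ⟨?_, fun i => ?_⟩⟩
  · nlinarith [h15a x, mul_nonneg (hσsafe x) (le_of_lt (neg_pos.mpr hs))]
  · nlinarith [h15b x, mul_nonneg (hσinit x) hw]
  · have := h15c x; rw [hBx] at this; linarith
  · have := h15d x i; rw [hBx] at this; linarith
end

section
/- Let n, m, h be natural numbers; let f : EuclideanSpace ℝ (Fin n) → EuclideanSpace ℝ (Fin n), g : EuclideanSpace ℝ (Fin n) → (Fin m → ℝ) →ₗ[ℝ] EuclideanSpace ℝ (Fin n), u : EuclideanSpace ℝ (Fin n) → (Fin m → ℝ), and s, w : EuclideanSpace ℝ (Fin n) → ℝ. Let B : EuclideanSpace ℝ (Fin n) → ℝ be continuously differentiable and let ε₁, ε₂ > 0. Suppose there exist σ_safe, σ_init : EuclideanSpace ℝ (Fin n) → ℝ with σ_safe ≥ 0 and σ_init ≥ 0 everywhere and λ₁ : EuclideanSpace ℝ (Fin n) → ℝ such that for all x: (i) −B(x) + σ_safe(x)·s(x) − ε₁ ≥ 0; (ii) B(x) − σ_init(x)·w(x) ≥ 0; and (iii) fderiv ℝ B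 x (f(x) + g(x)(u(x))) + λ₁(x)·B(x) − ε₂ ≥ 0. Then every solution x : ℝ → EuclideanSpace ℝ (Fin n) of the closed-loop system (HasDerivAt x (f(x(t)) + g(x(t))(u(x(t)))) t for all t ≥ 0) with w(x(0)) ≥ 0 satisfies s(x(t)) ≥ 0 for all t ≥ 0. -/
open Filter Topology Set

/-- A C¹-type barrier lemma: if `φ 0 ≥ 0` and whenever `φ t = 0` (for `t ≥ 0`)
the derivative is at least `ε > 0`, then `φ` stays nonnegative on `[0, ∞)`. -/
lemma barrier_nonneg (φ φ' : ℝ → ℝ) (ε : ℝ) (hε : 0 < ε)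
    (hd : ∀ t : ℝ, t ≥ 0 → HasDerivAt φ (φ' t) t)
    (h0 : 0 ≤ φ 0)
    (hz : ∀ t : ℝ, t ≥ 0 → φ t = 0 → ε ≤ φ' t) :
    ∀ t : ℝ, t ≥ 0 → 0 ≤ φ t := by
  intro t₁ ht₁
  set A : Set ℝ := {t | t ∈ Set.Icc 0 t₁ ∧ ∀ τ ∈ Set.Icc (0:ℝ) t, 0 ≤ φ τ} with hA
  have h0A : (0:ℝ) ∈ A := by
    refine ⟨⟨le_refl 0, ht₁⟩, fun τ hτ => ?_⟩
    have : τ = 0 := le_antisymm hτ.2 hτ.1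
    simpa [this] using h0
  have hne : A.Nonempty := ⟨0, h0A⟩
  have hbdd : BddAbove A := ⟨t₁, fun a ha => ha.1.2⟩
  set T := sSup A with hT
  have hT0 : 0 ≤ T := le_csSup hbdd h0A
  have hTt₁ : T ≤ t₁ := csSup_le hne fun a ha => ha.1.2
  have hlt : ∀ τ : ℝ, 0 ≤ τ → τ < T → 0 ≤ φ τ := by
    intro τ h1 h2
    obtain ⟨a, haA, hτa⟩ := exists_lt_of_lt_csSup hne h2
    exact haA.2 τ ⟨h1, hτa.le⟩
  have hcont : ContinuousAt φ T := (hd T hT0).continuousAt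
  have hφT : 0 ≤ φ T := by
    rcases eq_or_lt_of_le hT0 with h | h
    · rw [← h]; exact h0
    · have htd : Tendsto φ (𝓝[<] T) (𝓝 (φ T)) :=
        hcont.continuousWithinAt.tendsto
      refine ge_of_tendsto htd ?_
      filter_upwards [Ioo_mem_nhdsLT_of_mem (show T ∈ Set.Ioc (0:ℝ) T from ⟨h, le_refl T⟩)]
        with τ hτ
      exact hlt τ hτ.1.le hτ.2
  have hTA : ∀ τ ∈ Set.Icc (0:ℝ) T, 0 ≤ φ τ := by
    intro τ ⟨h1, h2⟩
    rcases lt_or_eq_of_le h2 with h | h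
    · exact hlt τ h1 h
    · rw [h]; exact hφT
  have hTeq : T = t₁ := by
    by_contra hneq
    have hTlt : T < t₁ := lt_of_le_of_ne hTt₁ hneq
    have hev : ∀ᶠ τ in 𝓝[>] T, 0 < φ τ := by
      rcases eq_or_lt_of_le hφT with hz0 | hp
      · -- φ T = 0 : use the derivative bound
        have hd' : ε ≤ φ' T := hz T hT0 hz0.symm
        have hpos : (0:ℝ) < φ' T := lt_of_lt_of_le hε hd'
        have hslope : Tendsto (slope φ T) (𝓝[≠] T) (𝓝 (φ' T)) :=
          hasDerivAt_iff_tendsto_slope.mp (hd T hT0)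
        have h2 : Tendsto (slope φ T) (𝓝[>] T) (𝓝 (φ' T)) :=
          hslope.mono_left (nhdsWithin_mono T (fun y hy => ne_of_gt hy))
        have h3 : ∀ᶠ τ in 𝓝[>] T, 0 < slope φ T τ :=
          h2.eventually (eventually_gt_nhds hpos)
        filter_upwards [h3, self_mem_nhdsWithin] with τ hs hτ
        have hτT : (0:ℝ) < τ - T := sub_pos.mpr hτ
        rw [slope_def_field] at hs
        have hnum : 0 < φ τ - φ T := by
          by_contra hc
          push_neg at hc
          have : (φ τ - φ T) / (τ - T) ≤ 0 := div_nonpos_iff.mpr (Or.inr ⟨hc, hτT.le⟩)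
          linarith
        linarith [hz0]
      · -- φ T > 0 : use continuity
        have h4 : ∀ᶠ τ in 𝓝 T, 0 < φ τ := hcont.eventually (eventually_gt_nhds hp)
        exact h4.filter_mono nhdsWithin_le_nhds
    obtain ⟨b, hb, hIoc⟩ := mem_nhdsGT_iff_exists_Ioc_subset.mp hev
    set t' := min b t₁ with ht'
    have hTt' : T < t' := lt_min hb hTlt
    have ht'A : t' ∈ A := by
      refine ⟨⟨le_trans hT0 hTt'.le, min_le_right _ _⟩, fun τ hτ => ?_⟩
      rcases le_or_gt τ T with h | h
      · exact hTA τ ⟨hτ.1, h⟩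
      · exact (hIoc ⟨h, le_trans hτ.2 (min_le_left _ _)⟩).le
    exact absurd (le_csSup hbdd ht'A) (not_le.mpr hTt')
  rw [hTeq] at hφT
  exact hφT

theorem sos_conditions_imply_safety (n m h : ℕ)
    (f : EuclideanSpace ℝ (Fin n) → EuclideanSpace ℝ (Fin n))
    (g : EuclideanSpace ℝ (Fin n) → (Fin m → ℝ) →ₗ[ℝ] EuclideanSpace ℝ (Fin n))
    (u : EuclideanSpace ℝ (Fin n) → (Fin m → ℝ))
    (s w : EuclideanSpace ℝ (Fin n) → ℝ)
    (B : EuclideanSpace ℝ (Fin n) → ℝ) (hB : ContDiff ℝ 1 B)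
    (ε₁ ε₂ : ℝ) (hε₁ : ε₁ > 0) (hε₂ : ε₂ > 0)
    (σsafe σinit : EuclideanSpace ℝ (Fin n) → ℝ)
    (hσsafe : ∀ x, σsafe x ≥ 0) (hσinit : ∀ x, σinit x ≥ 0)
    (lam₁ : EuclideanSpace ℝ (Fin n) → ℝ)
    (h15a : ∀ x, -B x + σsafe x * s x - ε₁ ≥ 0)
    (h15b : ∀ x, B x - σinit x * w x ≥ 0)
    (h15c : ∀ x, fderiv ℝ B x (f x + g x (u x)) + lam₁ x * B x - ε₂ ≥ 0) :
    ∀ x : ℝ → EuclideanSpace ℝ (Fin n),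
      (∀ t : ℝ, t ≥ 0 → HasDerivAt x (f (x t) + g (x t) (u (x t))) t) →
      w (x 0) ≥ 0 →
      ∀ t : ℝ, t ≥ 0 → s (x t) ≥ 0 := by
  intro x hx hw0 t ht
  have hφd : ∀ τ : ℝ, τ ≥ 0 →
      HasDerivAt (fun τ => B (x τ))
        (fderiv ℝ B (x τ) (f (x τ) + g (x τ) (u (x τ)))) τ := by
    intro τ hτ
    exact ((hB.differentiable one_ne_zero (x τ)).hasFDerivAt).comp_hasDerivAt τ (hx τ hτ)
  have hB0 : 0 ≤ B (x 0) := by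
    have h1 := h15b (x 0)
    have h2 : 0 ≤ σinit (x 0) * w (x 0) := mul_nonneg (hσinit _) hw0
    linarith
  have hBnn : ∀ τ : ℝ, τ ≥ 0 → 0 ≤ B (x τ) := by
    refine barrier_nonneg (fun τ => B (x τ))
      (fun τ => fderiv ℝ B (x τ) (f (x τ) + g (x τ) (u (x τ)))) ε₂ hε₂ hφd hB0 ?_
    intro τ hτ hzero
    have h1 := h15c (x τ)
    rw [hzero, mul_zero] at h1
    linarith
  have h1 := h15a (x t)
  have h2 := hBnn t ht
  by_contra hs
  push_neg at hs
  have h3 : σsafe (x t) * s (x t) ≤ 0 :=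
    mul_nonpos_of_nonneg_of_nonpos (hσsafe _) hs.le
  linarith
end

section
/- Let n be a natural number, let B : EuclideanSpace ℝ (Fin n) → ℝ be continuously differentiable (ContDiff ℝ 1), let F : EuclideanSpace ℝ (Fin n) → EuclideanSpace ℝ (Fin n), and let ε₂ > 0. Assume fderiv ℝ B x (F x) ≥ ε₂ for all x. Then every solution x : ℝ → EuclideanSpace ℝ (Fin n) of ẋ(t) = F(x(t)) (HasDerivAt x (F (x t)) t for all t ≥ 0) satisfies B(x(t)) ≥ B(x(0)) + ε₂·t for all t ≥ 0; in particular, if B(x(0)) ≥ 0, then B(x(t)) ≥ 0 for all t ≥ 0. -/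
theorem weak_barrier_certificate (n : ℕ)
    (B : EuclideanSpace ℝ (Fin n) → ℝ) (hB : ContDiff ℝ 1 B)
    (F : EuclideanSpace ℝ (Fin n) → EuclideanSpace ℝ (Fin n))
    (ε₂ : ℝ) (hε₂ : ε₂ > 0)
    (hineq : ∀ x, fderiv ℝ B x (F x) ≥ ε₂) :
    ∀ x : ℝ → EuclideanSpace ℝ (Fin n),
      (∀ t : ℝ, t ≥ 0 → HasDerivAt x (F (x t)) t) →
      ∀ t : ℝ, t ≥ 0 →
        B (x t) ≥ B (x 0) + ε₂ * t ∧ (B (x 0) ≥ 0 → B (x t) ≥ 0) := by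
  intro x hx t ht
  have hderiv : ∀ s : ℝ, s ≥ 0 → HasDerivAt (fun s => B (x s)) (fderiv ℝ B (x s) (F (x s))) s := by
    intro s hs
    exact ((hB.differentiable one_ne_zero).differentiableAt.hasFDerivAt.comp_hasDerivAt s (hx s hs))
  have hcont : ContinuousOn (fun s => B (x s)) (Set.Ici (0 : ℝ)) := by
    intro s hs
    exact ((hderiv s hs).continuousAt).continuousWithinAt
  have key : ε₂ * (t - 0) ≤ B (x t) - B (x 0) := by
    apply (convex_Ici (0:ℝ)).mul_sub_le_image_sub_of_le_deriv hcont
    · intro s hs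
      rw [interior_Ici] at hs
      exact ((hderiv s (le_of_lt hs)).differentiableAt).differentiableWithinAt
    · intro s hs
      rw [interior_Ici] at hs
      rw [(hderiv s (le_of_lt hs)).deriv]
      exact hineq (x s)
    · exact Set.self_mem_Ici
    · exact ht
    · exact ht
  have h1 : B (x t) ≥ B (x 0) + ε₂ * t := by nlinarith
  exact ⟨h1, fun h0 => by nlinarith⟩
end
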